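/- Let $I$ be a full-supported polymatroidal ideal of degree $2$ in $R=K[x_1,\dots,x_n]$ with $\mathfrak{m}=(x_1,\dots,x_n)\notin\mathrm{Ass}(R/I)$. Then $\mathrm{depth}(R/I) = 1$. -/

import Mathlib

open MvPolynomial

/-- The monomial ideal generated by the monomials with exponent vectors in `S`. -/
noncomputable def monomialIdeal (K : Type*) [Field K] {n : ℕ} (S : Set (Fin n →₀ ℕ)) :
    Ideal (MvPolynomial (Fin n) K) :=
  Ideal.span ((fun d => monomial d (1 : K)) '' S)

/-- The total degree of an exponent vector. -/
def mdeg {n : ℕ} (u : Fin n →₀ ℕ) : ℕ := u.sum fun _ e => e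

/-- `I` is a monomial ideal. -/
def IsMonomialIdeal {K : Type*} [Field K] {n : ℕ} (I : Ideal (MvPolynomial (Fin n) K)) : Prop :=
  ∃ S : Set (Fin n →₀ ℕ), I = monomialIdeal K S

/-- `I` is a polymatroidal ideal: a monomial ideal generated in a single degree
satisfying the exchange property. -/
def IsPolymatroidal {K : Type*} [Field K] {n : ℕ} (I : Ideal (MvPolynomial (Fin n) K)) : Prop :=
  ∃ S : Set (Fin n →₀ ℕ), I = monomialIdeal K S ∧
    (∃ d : ℕ, ∀ u ∈ S, mdeg u = d) ∧
    ∀ u ∈ S, ∀ v ∈ S, ∀ i : Fin n, v i < u i →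
      ∃ j : Fin n, u j < v j ∧
        monomial (u - Finsupp.single i 1 + Finsupp.single j 1) (1 : K) ∈ I

/-- The graded maximal ideal `(x₁, …, xₙ)`. -/
noncomputable def maxIdl (K : Type*) [Field K] (n : ℕ) : Ideal (MvPolynomial (Fin n) K) :=
  Ideal.span (Set.range X)

namespace Stmt14Aux

variable {K : Type*} [Field K] {n : ℕ} {S : Set (Fin n →₀ ℕ)}

/-- domination -/
def dm (S : Set (Fin n →₀ ℕ)) (w : Fin n →₀ ℕ) : Prop := ∃ s ∈ S, s ≤ w

theorem mem_mI {p : MvPolynomial (Fin n) K} :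
    p ∈ monomialIdeal K S ↔ ∀ d ∈ p.support, dm S d := by
  rw [monomialIdeal, mem_ideal_span_monomial_image]; rfl

theorem mono_mem {w : Fin n →₀ ℕ} :
    monomial w (1:K) ∈ monomialIdeal K S ↔ dm S w := by
  rw [mem_mI]
  constructor
  · intro h; exact h w (by simp [mem_support_iff])
  · intro h d hd
    rw [mem_support_iff, coeff_monomial] at hd
    rcases eq_or_ne w d with rfl | hne
    · exact h
    · simp [hne] at hd

theorem mdeg_add (u v : Fin n →₀ ℕ) : mdeg (u + v) = mdeg u + mdeg v :=
  Finsupp.sum_add_index' (fun _ => rfl) (fun _ _ _ => rfl)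

theorem mdeg_single (i : Fin n) (k : ℕ) : mdeg (Finsupp.single i k) = k :=
  Finsupp.sum_single_index rfl

theorem mdeg_zero : mdeg (0 : Fin n →₀ ℕ) = 0 := rfl

theorem mdeg_eq_zero {u : Fin n →₀ ℕ} (h : mdeg u = 0) : u = 0 := by
  ext a
  rcases Finset.sum_eq_zero_iff.mp h with h'
  by_cases ha : a ∈ u.support
  · exact h' a ha
  · simpa [Finsupp.mem_support_iff, not_not] using ha

theorem mdeg_mono {u v : Fin n →₀ ℕ} (h : u ≤ v) : mdeg u ≤ mdeg v := by
  have : v = u + (v - u) := (add_tsub_cancel_of_le h).symm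
  rw [this, mdeg_add]; omega

theorem eq_of_le_of_mdeg_eq {u v : Fin n →₀ ℕ} (h : u ≤ v) (hd : mdeg u = mdeg v) : u = v := by
  have h1 : v = u + (v - u) := (add_tsub_cancel_of_le h).symm
  have h2 : mdeg v = mdeg u + mdeg (v - u) := by
    conv_lhs => rw [h1]
    rw [mdeg_add]
  have : mdeg (v - u) = 0 := by omega
  have := mdeg_eq_zero this
  have h4 : v - u = 0 := this
  calc u = u + (v-u) := by rw [h4, add_zero]
  _ = v := h1.symm

theorem mdeg_one {u : Fin n →₀ ℕ} (h : mdeg u = 1) : ∃ i, u = Finsupp.single i 1 := by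
  have hne : u ≠ 0 := fun h0 => by simp [h0, mdeg_zero] at h
  obtain ⟨i, hi⟩ := Finsupp.ne_iff.mp hne
  simp only [Finsupp.coe_zero, Pi.zero_apply] at hi
  have hle : Finsupp.single i 1 ≤ u := by
    rw [Finsupp.single_le_iff]; omega
  refine ⟨i, (eq_of_le_of_mdeg_eq hle ?_).symm⟩
  rw [mdeg_single, h]

theorem mdeg_two {u : Fin n →₀ ℕ} (h : mdeg u = 2) :
    ∃ i j, u = Finsupp.single i 1 + Finsupp.single j 1 := by
  have hne : u ≠ 0 := fun h0 => by simp [h0, mdeg_zero] at h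
  obtain ⟨i, hi⟩ := Finsupp.ne_iff.mp hne
  simp only [Finsupp.coe_zero, Pi.zero_apply] at hi
  have hle : Finsupp.single i 1 ≤ u := by rw [Finsupp.single_le_iff]; omega
  have h1 : mdeg (u - Finsupp.single i 1) = 1 := by
    have : u = Finsupp.single i 1 + (u - Finsupp.single i 1) := (add_tsub_cancel_of_le hle).symm
    have h2 := congrArg mdeg this
    rw [mdeg_add, mdeg_single, h] at h2; omega
  obtain ⟨j, hj⟩ := mdeg_one h1
  refine ⟨i, j, ?_⟩
  rw [← hj, add_tsub_cancel_of_le hle]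


theorem maxIdl_eq_ker :
    maxIdl K n = RingHom.ker (constantCoeff : MvPolynomial (Fin n) K →+* K) := by
  apply le_antisymm
  · rw [maxIdl, Ideal.span_le]
    rintro - ⟨i, rfl⟩
    simp [RingHom.mem_ker]
  · intro p hp
    rw [RingHom.mem_ker] at hp
    have hrep : p = ∑ d ∈ p.support, monomial d (coeff d p) := (support_sum_monomial_coeff p).symm
    rw [hrep]
    apply Ideal.sum_mem
    intro d hd
    have hdne : d ≠ 0 := by
      rintro rfl
      rw [mem_support_iff] at hd
      exact hd hp
    obtain ⟨i, hi⟩ := Finsupp.ne_iff.mp hdne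
    simp only [Finsupp.coe_zero, Pi.zero_apply] at hi
    have hle : Finsupp.single i 1 ≤ d := by rw [Finsupp.single_le_iff]; omega
    have : monomial d (coeff d p) = monomial (d - Finsupp.single i 1) (coeff d p) * X i := by
      have h2 : (d - Finsupp.single i 1) + Finsupp.single i 1 = d := tsub_add_cancel_of_le hle
      calc monomial d (coeff d p)
          = monomial ((d - Finsupp.single i 1) + Finsupp.single i 1) (coeff d p) := by rw [h2]
        _ = monomial (d - Finsupp.single i 1) (coeff d p) * X i ^ 1 := monomial_add_single
        _ = monomial (d - Finsupp.single i 1) (coeff d p) * X i := by rw [pow_one]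
    rw [this]
    exact Ideal.mul_mem_left _ _ (Ideal.subset_span ⟨i, rfl⟩)

theorem maxIdl_isMaximal : (maxIdl K n).IsMaximal := by
  rw [maxIdl_eq_ker]
  exact RingHom.ker_isMaximal_of_surjective _ (fun k => ⟨C k, constantCoeff_C _ _⟩)

theorem mem_maxIdl {p : MvPolynomial (Fin n) K} :
    p ∈ maxIdl K n ↔ constantCoeff p = 0 := by
  rw [maxIdl_eq_ker]; rfl


def Ed (S : Set (Fin n →₀ ℕ)) (i j : Fin n) : Prop :=
  Finsupp.single i 1 + Finsupp.single j 1 ∈ S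

def Lp (S : Set (Fin n →₀ ℕ)) (i : Fin n) : Prop := Finsupp.single i 2 ∈ S

def Indep (S : Set (Fin n →₀ ℕ)) (A : Finset (Fin n)) : Prop :=
  ∀ i ∈ A, ∀ j ∈ A, i ≠ j → ¬ Ed S i j

theorem Ed_symm {i j : Fin n} (h : Ed S i j) : Ed S j i := by
  rw [Ed, add_comm]; exact h

theorem single_add_single_self (i : Fin n) :
    Finsupp.single i 1 + Finsupp.single i 1 = Finsupp.single i (2:ℕ) := by
  rw [← Finsupp.single_add]

theorem le2 {i j : Fin n} {w : Fin n →₀ ℕ} (hij : i ≠ j) :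
    Finsupp.single i 1 + Finsupp.single j 1 ≤ w ↔ 1 ≤ w i ∧ 1 ≤ w j := by
  rw [Finsupp.le_def]
  constructor
  · intro h
    have hi := h i
    have hj := h j
    rw [Finsupp.add_apply, Finsupp.single_eq_same, Finsupp.single_eq_of_ne' (Ne.symm hij)] at hi
    rw [Finsupp.add_apply, Finsupp.single_eq_of_ne' hij, Finsupp.single_eq_same] at hj
    omega
  · intro ⟨h1, h2⟩ k
    rw [Finsupp.add_apply]
    rcases eq_or_ne i k with rfl | hik
    · rw [Finsupp.single_eq_same, Finsupp.single_eq_of_ne' (fun hh : j = i => hij hh.symm)]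
      omega
    · rw [Finsupp.single_eq_of_ne' hik]
      rcases eq_or_ne j k with rfl | hjk
      · rw [Finsupp.single_eq_same]; omega
      · rw [Finsupp.single_eq_of_ne' hjk]; omega

theorem dm_iff (hdeg : ∀ u ∈ S, mdeg u = 2) {w : Fin n →₀ ℕ} :
    dm S w ↔ (∃ i j, i ≠ j ∧ Ed S i j ∧ 1 ≤ w i ∧ 1 ≤ w j) ∨ (∃ i, Lp S i ∧ 2 ≤ w i) := by
  constructor
  · rintro ⟨s, hs, hle⟩
    obtain ⟨i, j, rfl⟩ := mdeg_two (hdeg s hs)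
    rcases eq_or_ne i j with rfl | hij
    · right
      refine ⟨i, ?_, ?_⟩
      · rw [Lp, ← single_add_single_self]; exact hs
      · have := hle i
        rw [Finsupp.add_apply, Finsupp.single_eq_same] at this
        omega
    · left
      exact ⟨i, j, hij, hs, (le2 hij).mp hle⟩
  · rintro (⟨i, j, hij, he, h1, h2⟩ | ⟨i, hl, h2⟩)
    · exact ⟨_, he, (le2 hij).mpr ⟨h1, h2⟩⟩
    · refine ⟨_, hl, ?_⟩
      rw [Finsupp.single_le_iff]; exact h2

theorem S_mem {s : Fin n →₀ ℕ} (hs : s ∈ S) : monomial s (1:K) ∈ monomialIdeal K S :=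
  mono_mem.mpr ⟨s, hs, le_rfl⟩

theorem hm_witness (w : Fin n →₀ ℕ) (hmono : ¬ dm S w)
    (hup : ∀ i, dm S (w + Finsupp.single i 1)) :
    maxIdl K n ∈ associatedPrimes (MvPolynomial (Fin n) K)
      (MvPolynomial (Fin n) K ⧸ monomialIdeal K S) := by
  set I := monomialIdeal K S with hIdef
  refine isAssociatedPrime_iff.mpr ⟨maxIdl_isMaximal.isPrime, Ideal.Quotient.mk I (monomial w 1), ?_⟩
  rw [Submodule.bot_colon']
  have hle : maxIdl K n ≤ (Submodule.span (MvPolynomial (Fin n) K)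
      {Ideal.Quotient.mk I (monomial w 1)}).annihilator := by
    rw [maxIdl, Ideal.span_le]
    rintro - ⟨i, rfl⟩
    rw [SetLike.mem_coe, Submodule.mem_annihilator_span_singleton]
    show Ideal.Quotient.mk I (X i * monomial w 1) = 0
    rw [Ideal.Quotient.eq_zero_iff_mem]
    have : X i * monomial w (1:K) = monomial (w + Finsupp.single i 1) 1 := by
      rw [X, monomial_mul, one_mul, add_comm]
    rw [this]
    exact mono_mem.mpr (hup i)
  have hne : (Submodule.span (MvPolynomial (Fin n) K)
      {Ideal.Quotient.mk I (monomial w 1)}).annihilator ≠ ⊤ := by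
    intro htop
    have h1 : (1 : MvPolynomial (Fin n) K) ∈ (Submodule.span (MvPolynomial (Fin n) K)
      {Ideal.Quotient.mk I (monomial w 1)}).annihilator := htop ▸ Submodule.mem_top
    rw [Submodule.mem_annihilator_span_singleton, one_smul, Ideal.Quotient.eq_zero_iff_mem] at h1
    exact hmono (mono_mem.mp h1)
  exact maxIdl_isMaximal.eq_of_le hne hle

theorem maximal_indep_nonloop (hdeg : ∀ u ∈ S, mdeg u = 2)
    (hm : maxIdl K n ∉ associatedPrimes (MvPolynomial (Fin n) K)
      (MvPolynomial (Fin n) K ⧸ monomialIdeal K S))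
    (A : Finset (Fin n)) (hA : Indep S A) (hAmax : ∀ i ∉ A, ¬ Indep S (insert i A)) :
    ∃ i ∈ A, ¬ Lp S i := by
  by_contra hcon
  push_neg at hcon
  set w : Fin n →₀ ℕ := ∑ i ∈ A, Finsupp.single i 1 with hw
  have hwv : ∀ j, w j = if j ∈ A then 1 else 0 := by
    intro j
    rw [hw, Finsupp.finset_sum_apply]
    rw [Finset.sum_congr rfl (fun i _ => Finsupp.single_apply)]
    exact Finset.sum_ite_eq' A j (fun _ => 1)
  have hmono : ¬ dm S w := by
    rw [dm_iff hdeg]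
    rintro (⟨i, j, hij, he, h1, h2⟩ | ⟨i, _, h2⟩)
    · have hi : i ∈ A := by by_contra h; rw [hwv i, if_neg h] at h1; omega
      have hj : j ∈ A := by by_contra h; rw [hwv j, if_neg h] at h2; omega
      exact hA i hi j hj hij he
    · rw [hwv i] at h2; split at h2 <;> omega
  have hup : ∀ i, dm S (w + Finsupp.single i 1) := by
    intro i
    rw [dm_iff hdeg]
    by_cases hi : i ∈ A
    · right
      refine ⟨i, hcon i hi, ?_⟩
      rw [Finsupp.add_apply, hwv i, if_pos hi, Finsupp.single_eq_same]
    · left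
      have hni := hAmax i hi
      rw [Indep] at hni
      push_neg at hni
      obtain ⟨a, ha, b, hb, hab, he⟩ := hni
      have hval : ∀ c ∈ A, 1 ≤ (w + Finsupp.single i 1 : Fin n →₀ ℕ) c := by
        intro c hc
        rw [Finsupp.add_apply, hwv c, if_pos hc]
        omega
      have hvali : 1 ≤ (w + Finsupp.single i 1 : Fin n →₀ ℕ) i := by
        rw [Finsupp.add_apply, Finsupp.single_eq_same]
        omega
      rcases Finset.mem_insert.mp ha with rfl | ha'
      · have hb' : b ∈ A := by
          rcases Finset.mem_insert.mp hb with rfl | h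
          · exact absurd rfl hab
          · exact h
        exact ⟨a, b, hab, he, hvali, hval b hb'⟩
      · rcases Finset.mem_insert.mp hb with rfl | hb'
        · exact ⟨a, b, hab, he, hval a ha', hvali⟩
        · exact absurd he (hA a ha' b hb' hab)
  exact hm (hm_witness w hmono hup)

theorem single_two_sub (i : Fin n) :
    (Finsupp.single i 2 - Finsupp.single i 1 : Fin n →₀ ℕ) = Finsupp.single i 1 := by
  ext a
  rw [Finsupp.tsub_apply]
  rcases eq_or_ne i a with rfl | h
  · rw [Finsupp.single_eq_same, Finsupp.single_eq_same]
  · rw [Finsupp.single_eq_of_ne' h, Finsupp.single_eq_of_ne' h]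
    rfl

theorem mdeg_pair (i j : Fin n) : mdeg (Finsupp.single i 1 + Finsupp.single j 1) = 2 := by
  rw [mdeg_add, mdeg_single, mdeg_single]

theorem dm_sq (hdeg : ∀ u ∈ S, mdeg u = 2) {w : Fin n →₀ ℕ} (hw : mdeg w = 2)
    (h : monomial w (1:K) ∈ monomialIdeal K S) : w ∈ S := by
  obtain ⟨s, hs, hle⟩ := mono_mem.mp h
  rwa [eq_of_le_of_mdeg_eq hle (by rw [hdeg s hs, hw])] at hs

theorem pair_mem_S (hdeg : ∀ u ∈ S, mdeg u = 2) {i j : Fin n}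
    (h : monomial (Finsupp.single i 1 + Finsupp.single j 1) (1:K) ∈ monomialIdeal K S) :
    Ed S i j :=
  dm_sq (K := K) hdeg (mdeg_pair i j) h

section Exchange

variable (hdeg : ∀ u ∈ S, mdeg u = 2)
  (hexch : ∀ u ∈ S, ∀ v ∈ S, ∀ i : Fin n, v i < u i →
      ∃ j : Fin n, u j < v j ∧
        monomial (u - Finsupp.single i 1 + Finsupp.single j 1) (1 : K) ∈ monomialIdeal K S)
  (hfull : ∀ i : Fin n, ∃ u ∈ S, u i ≠ 0)

include hdeg hfull in
theorem edge_or_loop (i : Fin n) : Lp S i ∨ ∃ b, b ≠ i ∧ Ed S i b := by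
  obtain ⟨u, hu, hui⟩ := hfull i
  obtain ⟨a, b, rfl⟩ := mdeg_two (hdeg u hu)
  rcases eq_or_ne a i with rfl | hai
  · rcases eq_or_ne b a with rfl | hba
    · left; rw [Lp, ← single_add_single_self]; exact hu
    · right; exact ⟨b, fun h => hba h, hu⟩
  · rcases eq_or_ne b i with rfl | hbi
    · right
      exact ⟨a, hai, Ed_symm hu⟩
    · rw [Finsupp.add_apply, Finsupp.single_eq_of_ne' hai, Finsupp.single_eq_of_ne' hbi] at hui
      exact absurd rfl hui

include hdeg hexch hfull in
theorem loop_adj {c : Fin n} (hc : Lp S c) {i : Fin n} (hic : i ≠ c) : Ed S c i := by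
  have hvj : ∀ u : Fin n →₀ ℕ, ∀ j, u j < (Finsupp.single c 2 : Fin n →₀ ℕ) j → j = c := by
    intro u j h
    by_contra hne
    rw [Finsupp.single_eq_of_ne' (fun hh : c = j => hne hh.symm)] at h
    omega
  rcases edge_or_loop hdeg hfull i with hl | ⟨b, hbi, he⟩
  · obtain ⟨j, hj, hmem⟩ := hexch (Finsupp.single i 2) hl (Finsupp.single c 2) hc i
      (by rw [Finsupp.single_eq_same, Finsupp.single_eq_of_ne' (Ne.symm hic)]; omega)
    have hjc := hvj _ j hj
    subst hjc
    rw [single_two_sub] at hmem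
    exact Ed_symm (pair_mem_S hdeg hmem)
  · rcases eq_or_ne b c with rfl | hbc
    · exact Ed_symm he
    · obtain ⟨j, hj, hmem⟩ := hexch _ he (Finsupp.single c 2) hc b
        (by rw [Finsupp.add_apply, Finsupp.single_eq_same,
              Finsupp.single_eq_of_ne' (fun hh : i = b => hbi hh.symm),
              Finsupp.single_eq_of_ne' (fun hh : c = b => hbc hh.symm)]; omega)
      have hjc := hvj _ j hj
      subst hjc
      rw [add_tsub_cancel_right] at hmem
      exact Ed_symm (pair_mem_S hdeg hmem)

include hdeg hexch hfull in
theorem nadj_trans (hnl : ∀ i, ¬ Lp S i) {a b c : Fin n}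
    (hab : a ≠ b) (hbc : b ≠ c) (hac : a ≠ c)
    (nab : ¬ Ed S a b) (nbc : ¬ Ed S b c) : ¬ Ed S a c := by
  intro hEac
  obtain ⟨d, hdb, hEbd⟩ := (edge_or_loop hdeg hfull b).resolve_left (hnl b)
  have hda : d ≠ a := by
    rintro rfl
    exact nab (Ed_symm hEbd)
  have hdc : d ≠ c := by
    rintro rfl
    exact nbc hEbd
  obtain ⟨j, hj, hmem⟩ := hexch _ hEbd _ hEac d
    (by rw [Finsupp.add_apply, Finsupp.single_eq_of_ne' (fun h : a = d => hda h.symm),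
          Finsupp.single_eq_of_ne' (fun h : c = d => hdc h.symm),
          Finsupp.add_apply, Finsupp.single_eq_of_ne' (fun h : b = d => hdb h.symm),
          Finsupp.single_eq_same]; omega)
  rw [add_tsub_cancel_right] at hmem
  have hjac : j = a ∨ j = c := by
    by_contra hcon
    push_neg at hcon
    simp only [Finsupp.add_apply] at hj
    rw [Finsupp.single_eq_of_ne' (fun h : a = j => hcon.1 h.symm),
      Finsupp.single_eq_of_ne' (fun h : c = j => hcon.2 h.symm)] at hj
    omega
  rcases hjac with rfl | rfl
  · exact nab (Ed_symm (pair_mem_S hdeg hmem))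
  · exact nbc (pair_mem_S hdeg hmem)

include hdeg hexch hfull in
theorem exists_cut (hn : 2 ≤ n) :
    ∃ B : Finset (Fin n), B.Nonempty ∧ B ≠ Finset.univ ∧
      ∀ k ∈ B, ∀ i ∉ B, Ed S k i := by
  by_cases hL : ∃ c, Lp S c
  · obtain ⟨c, hc⟩ := hL
    refine ⟨{c}, ⟨c, Finset.mem_singleton_self c⟩, ?_, ?_⟩
    · intro huniv
      haveI : Nontrivial (Fin n) := Fin.nontrivial_iff_two_le.mpr hn
      obtain ⟨i, hi⟩ := exists_ne c
      have : i ∈ ({c} : Finset (Fin n)) := huniv ▸ Finset.mem_univ i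
      exact hi (Finset.mem_singleton.mp this)
    · intro k hk i hi
      rw [Finset.mem_singleton] at hk
      subst hk
      exact loop_adj hdeg hexch hfull hc (fun h => hi (h ▸ Finset.mem_singleton_self k))
  · push_neg at hL
    have hpos : 0 < n := by omega
    set a₀ : Fin n := ⟨0, hpos⟩ with ha₀
    classical
    set B : Finset (Fin n) := insert a₀ (Finset.univ.filter (fun j => j ≠ a₀ ∧ ¬ Ed S a₀ j))
      with hB
    obtain ⟨b, hba, hEb⟩ := (edge_or_loop hdeg hfull a₀).resolve_left (hL a₀)
    refine ⟨B, ⟨a₀, Finset.mem_insert_self _ _⟩, ?_, ?_⟩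
    · intro huniv
      have hbB : b ∈ B := huniv ▸ Finset.mem_univ b
      rw [hB, Finset.mem_insert, Finset.mem_filter] at hbB
      rcases hbB with rfl | ⟨-, -, hnE⟩
      · exact hba rfl
      · exact hnE hEb
    · intro k hk i hi
      have hiB : i ≠ a₀ ∧ Ed S a₀ i := by
        rw [hB, Finset.mem_insert, Finset.mem_filter] at hi
        push_neg at hi
        obtain ⟨h1, h2⟩ := hi
        exact ⟨h1, h2 (Finset.mem_univ i) h1⟩
      rw [hB, Finset.mem_insert, Finset.mem_filter] at hk
      rcases hk with rfl | ⟨-, hka, hnE⟩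
      · exact hiB.2
      · have hki : k ≠ i := by
          rintro rfl
          rw [hB, Finset.mem_insert, Finset.mem_filter] at hi
          push_neg at hi
          exact hnE (hi.2 (Finset.mem_univ k) hka)
        by_contra hnki
        exact nadj_trans hdeg hexch hfull hL (Ne.symm hka) hki (Ne.symm hiB.1)
          hnE hnki (hiB.2)
  end Exchange

end Stmt14Aux

noncomputable def sg (K : Type*) [Field K] (n : ℕ) : MvPolynomial (Fin n) K := ∑ i : Fin n, X i

namespace Stmt14Aux

variable {K : Type*} [Field K] {n : ℕ} {S : Set (Fin n →₀ ℕ)}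

theorem mu_add (μ : (Fin n →₀ ℕ) → ℕ)
    (hμ : μ = fun v => ∑ i : Fin n, v i * (n - i.val)) (u w : Fin n →₀ ℕ) :
    μ (u + w) = μ u + μ w := by
  subst hμ
  simp only [Finsupp.add_apply, add_mul, Finset.sum_add_distrib]

theorem mu_single (μ : (Fin n →₀ ℕ) → ℕ)
    (hμ : μ = fun v => ∑ i : Fin n, v i * (n - i.val)) (j : Fin n) :
    μ (Finsupp.single j 1) = n - j.val := by
  subst hμ
  simp only [Finsupp.single_apply, ite_mul, zero_mul, one_mul]
  rw [Finset.sum_ite_eq]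
  simp

theorem sigma_regular (hdeg : ∀ u ∈ S, mdeg u = 2)
    (hm : maxIdl K n ∉ associatedPrimes (MvPolynomial (Fin n) K)
      (MvPolynomial (Fin n) K ⧸ monomialIdeal K S))
    (p : MvPolynomial (Fin n) K) (hsp : sg K n * p ∈ monomialIdeal K S) :
    p ∈ monomialIdeal K S := by
  classical
  set I := monomialIdeal K S with hI
  set Fq : Finset (Fin n →₀ ℕ) := p.support.filter (fun e => ¬ dm S e) with hFq
  set q : MvPolynomial (Fin n) K := ∑ e ∈ Fq, monomial e (coeff e p) with hqdef
  have hq : ∀ d, coeff d q = if d ∈ Fq then coeff d p else 0 := by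
    intro d
    rw [hqdef, coeff_sum]
    simp only [coeff_monomial]
    exact Finset.sum_ite_eq' Fq d (fun e => coeff e p)
  have hterm : ∀ e : Fin n →₀ ℕ, dm S e → ∀ c : K, monomial e c ∈ I := by
    intro e he c
    have : monomial e c = C c * monomial e 1 := by rw [C_mul_monomial, mul_one]
    rw [this]
    exact Ideal.mul_mem_left _ _ (mono_mem.mpr he)
  have hpq : p - q ∈ I := by
    have hsplit : (∑ e ∈ p.support.filter (fun e => dm S e), monomial e (coeff e p)) + q = p := by
      rw [hqdef, hFq]
      rw [Finset.sum_filter_add_sum_filter_not p.support (fun e => dm S e)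
        (fun e => monomial e (coeff e p))]
      exact support_sum_monomial_coeff p
    have h2 : p - q = ∑ e ∈ p.support.filter (fun e => dm S e), monomial e (coeff e p) := by
      exact (eq_sub_of_add_eq hsplit).symm
    rw [h2]
    exact Ideal.sum_mem _ (fun e he => hterm e (Finset.mem_filter.mp he).2 _)
  suffices hqz : q = 0 by
    have := hpq
    rwa [hqz, sub_zero] at this
  have hsq : sg K n * q ∈ I := by
    have h2 : sg K n * (p - q) ∈ I := Ideal.mul_mem_left _ _ hpq
    have h3 : sg K n * q = sg K n * p - sg K n * (p - q) := by ring
    rw [h3]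
    exact Ideal.sub_mem _ hsp h2
  have E1 : ∀ c : Fin n →₀ ℕ, ¬ dm S c →
      ∑ i ∈ c.support, coeff (c - Finsupp.single i 1) q = 0 := by
    intro c hc
    have h0 : coeff c (sg K n * q) = 0 := by
      by_contra h
      exact hc (mem_mI.mp hsq c (mem_support_iff.mpr h))
    rw [sg, Finset.sum_mul, coeff_sum] at h0
    simp only [coeff_X_mul'] at h0
    rwa [Finset.sum_ite_mem, Finset.univ_inter] at h0
  have hqdm : ∀ d, coeff d q ≠ 0 → ¬ dm S d := by
    intro d hd
    rw [hq] at hd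
    by_cases hmem : d ∈ Fq
    · exact (Finset.mem_filter.mp hmem).2
    · rw [if_neg hmem] at hd; exact absurd rfl hd
  have main : ∀ a : ℕ, ∀ d : Fin n →₀ ℕ, d.support.card = a → coeff d q = 0 := by
    intro a
    induction a using Nat.strong_induction_on with
    | _ a IH =>
    have step1 : ∀ d : Fin n →₀ ℕ, d.support.card = a →
        (∃ i ∈ d.support, ¬ Lp S i) → coeff d q = 0 := by
      intro d hcard hex
      obtain ⟨i₁, hi₁s, hi₁L⟩ := hex
      by_contra hd0
      have hdm : ¬ dm S d := hqdm d hd0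
      set A := d.support with hA
      set F : Finset (Fin n) := A.filter (fun i => ¬ Lp S i) with hF
      have hFne : F.Nonempty := ⟨i₁, Finset.mem_filter.mpr ⟨hi₁s, hi₁L⟩⟩
      set sl : (Fin n →₀ ℕ) → Prop := fun e => e.support = A ∧ ∀ i, 2 ≤ e i → i ∈ F with hsl
      set T : Finset (Fin n →₀ ℕ) := q.support.filter sl with hT
      have hdT : d ∈ T := by
        refine Finset.mem_filter.mpr ⟨mem_support_iff.mpr hd0, rfl, ?_⟩
        intro i h2
        have his : i ∈ A := by
          rw [hA, Finsupp.mem_support_iff]; omega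
        refine Finset.mem_filter.mpr ⟨his, ?_⟩
        intro hlp
        exact hdm ((dm_iff hdeg).mpr (Or.inr ⟨i, hlp, h2⟩))
      set μ : (Fin n →₀ ℕ) → ℕ := fun v => ∑ i : Fin n, v i * (n - i.val) with hμ
      obtain ⟨v, hvT, hvmax⟩ := T.exists_max_image μ ⟨d, hdT⟩
      obtain ⟨hvq, hvsupp, hvmark⟩ := Finset.mem_filter.mp hvT
      have hvdm : ¬ dm S v := hqdm v (mem_support_iff.mp hvq)
      set i₀ := F.min' hFne with hi₀
      have hi₀F : i₀ ∈ F := F.min'_mem hFne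
      have hi₀A : i₀ ∈ A := (Finset.mem_filter.mp hi₀F).1
      have hi₀L : ¬ Lp S i₀ := (Finset.mem_filter.mp hi₀F).2
      set c := v + Finsupp.single i₀ 1 with hc
      have hcval : ∀ x, c x = v x + if i₀ = x then 1 else 0 := by
        intro x
        rw [hc, Finsupp.add_apply, Finsupp.single_apply]
      have hcsupp : c.support = A := by
        ext x
        rw [Finsupp.mem_support_iff, hcval]
        constructor
        · intro hx
          by_cases hvx : v x = 0
          · rw [hvx] at hx
            have : i₀ = x := by by_contra hne; rw [if_neg hne] at hx; omega
            exact this ▸ hi₀A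
          · rw [← hvsupp]; exact Finsupp.mem_support_iff.mpr hvx
        · intro hx
          have : v x ≠ 0 := Finsupp.mem_support_iff.mp (hvsupp ▸ hx)
          omega
      have hcmark : ∀ i, 2 ≤ c i → i ∈ F := by
        intro i h2
        rcases eq_or_ne i₀ i with rfl | hne
        · exact hi₀F
        · rw [hcval, if_neg hne] at h2
          exact hvmark i (by omega)
      have hcdm : ¬ dm S c := by
        rw [dm_iff hdeg]
        rintro (⟨i, j, hij, he, h1, h2⟩ | ⟨i, hlp, h2⟩)
        · have hiA : i ∈ A := hcsupp ▸ Finsupp.mem_support_iff.mpr (by omega)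
          have hjA : j ∈ A := hcsupp ▸ Finsupp.mem_support_iff.mpr (by omega)
          have hvi : 1 ≤ v i := by
            have := Finsupp.mem_support_iff.mp (hvsupp ▸ hiA); omega
          have hvj : 1 ≤ v j := by
            have := Finsupp.mem_support_iff.mp (hvsupp ▸ hjA); omega
          exact hvdm ((dm_iff hdeg).mpr (Or.inl ⟨i, j, hij, he, hvi, hvj⟩))
        · exact (Finset.mem_filter.mp (hcmark i h2)).2 hlp
      have heq := E1 c hcdm
      rw [hcsupp] at heq
      have htermz : ∀ j ∈ A, j ≠ i₀ → coeff (c - Finsupp.single j 1) q = 0 := by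
        intro j hjA hji
        have hcj1 : 1 ≤ c j := by
          have := Finsupp.mem_support_iff.mp (hcsupp ▸ hjA : j ∈ c.support)
          omega
        by_cases hcj : 2 ≤ c j
        · have hjF : j ∈ F := hcmark j hcj
          have hij0 : i₀ < j := lt_of_le_of_ne (F.min'_le j hjF) (Ne.symm hji)
          by_contra h0
          have hsupp2 : (c - Finsupp.single j 1).support = A := by
            ext x
            rw [Finsupp.mem_support_iff, Finsupp.tsub_apply, Finsupp.single_apply]
            rcases eq_or_ne j x with rfl | hne
            · rw [if_pos rfl]
              constructor
              · intro _; exact hjA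
              · intro _; omega
            · rw [if_neg hne]
              rw [← hcsupp, Finsupp.mem_support_iff]
              omega
          have hmemT : (c - Finsupp.single j 1) ∈ T := by
            refine Finset.mem_filter.mpr ⟨mem_support_iff.mpr h0, hsupp2, ?_⟩
            intro i h2i
            rw [Finsupp.tsub_apply] at h2i
            exact hcmark i (by omega)
          have hle1 : Finsupp.single j 1 ≤ c := by
            rw [Finsupp.single_le_iff]; omega
          have hadd : (c - Finsupp.single j 1) + Finsupp.single j 1 = c :=
            tsub_add_cancel_of_le hle1
          have hμ1 : μ c = μ (c - Finsupp.single j 1) + (n - j.val) := by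
            conv_lhs => rw [← hadd]
            rw [mu_add μ hμ, mu_single μ hμ]
          have hμ2 : μ c = μ v + (n - i₀.val) := by
            rw [hc, mu_add μ hμ, mu_single μ hμ]
          have hlev : μ (c - Finsupp.single j 1) ≤ μ v := hvmax _ hmemT
          have hjlt : j.val < n := j.isLt
          have hilt : i₀.val < j.val := hij0
          omega
        · have hcj2 : c j = 1 := by omega
          have hsupp3 : (c - Finsupp.single j 1).support = A.erase j := by
            ext x
            rw [Finsupp.mem_support_iff, Finsupp.tsub_apply, Finsupp.single_apply,
              Finset.mem_erase]
            rcases eq_or_ne j x with rfl | hne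
            · rw [if_pos rfl, hcj2]
              simp
            · rw [if_neg hne, ← hcsupp, Finsupp.mem_support_iff]
              constructor
              · intro h; exact ⟨Ne.symm hne, by omega⟩
              · rintro ⟨-, h⟩; omega
          have hcard3 : (c - Finsupp.single j 1).support.card = a - 1 := by
            rw [hsupp3, Finset.card_erase_of_mem hjA, hA, hcard]
          have hapos : 1 ≤ a := by
            rw [← hcard]
            exact Finset.card_pos.mpr ⟨i₁, hi₁s⟩
          exact IH (a - 1) (by omega) _ hcard3
      have hsum : ∑ j ∈ A, coeff (c - Finsupp.single j 1) q
          = coeff (c - Finsupp.single i₀ 1) q :=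
        Finset.sum_eq_single i₀ (fun j hj hne => htermz j hj hne)
          (fun h => absurd hi₀A h)
      rw [hsum] at heq
      rw [hc, add_tsub_cancel_right] at heq
      exact (mem_support_iff.mp hvq) heq
    intro d hcard
    by_contra hd0
    have hdm : ¬ dm S d := hqdm d hd0
    by_cases hex : ∃ i ∈ d.support, ¬ Lp S i
    · exact hd0 (step1 d hcard hex)
    · push_neg at hex
      have hd01 : ∀ i, d i ≤ 1 := by
        intro i
        by_contra h
        push_neg at h
        have his : i ∈ d.support := Finsupp.mem_support_iff.mpr (by omega)
        exact hdm ((dm_iff hdeg).mpr (Or.inr ⟨i, hex i his, by omega⟩))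
      have hindep : Indep S d.support := by
        intro i hi j hj hij he
        have h1 : 1 ≤ d i := by have := Finsupp.mem_support_iff.mp hi; omega
        have h2 : 1 ≤ d j := by have := Finsupp.mem_support_iff.mp hj; omega
        exact hdm ((dm_iff hdeg).mpr (Or.inl ⟨i, j, hij, he, h1, h2⟩))
      set 𝒜 : Finset (Finset (Fin n)) :=
        Finset.univ.powerset.filter (fun B => d.support ⊆ B ∧ Indep S B) with h𝒜
      have h𝒜ne : 𝒜.Nonempty := by
        refine ⟨d.support, Finset.mem_filter.mpr ⟨?_, subset_rfl, hindep⟩⟩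
        exact Finset.mem_powerset.mpr (Finset.subset_univ _)
      obtain ⟨Astar, hAstar, hAmaxcard⟩ := 𝒜.exists_max_image Finset.card h𝒜ne
      obtain ⟨-, hsub, hindepA⟩ := Finset.mem_filter.mp hAstar
      have hmaxl : ∀ i ∉ Astar, ¬ Indep S (insert i Astar) := by
        intro i hi hcon
        have hmem : insert i Astar ∈ 𝒜 := by
          refine Finset.mem_filter.mpr ⟨Finset.mem_powerset.mpr (Finset.subset_univ _),
            hsub.trans (Finset.subset_insert _ _), hcon⟩
        have hcle := hAmaxcard _ hmem
        rw [Finset.card_insert_of_notMem hi] at hcle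
        omega
      obtain ⟨istar, histar, histarL⟩ := maximal_indep_nonloop hdeg hm Astar hindepA hmaxl
      have histard : istar ∉ d.support := fun h => histarL (hex istar h)
      set c := d + Finsupp.single istar 1 with hc
      have hcval : ∀ x, c x = d x + if istar = x then 1 else 0 := by
        intro x
        rw [hc, Finsupp.add_apply, Finsupp.single_apply]
      have hdsub : d.support ⊆ Astar := hsub
      have hcsupp : c.support = insert istar d.support := by
        ext x
        rw [Finsupp.mem_support_iff, hcval, Finset.mem_insert, Finsupp.mem_support_iff]
        rcases eq_or_ne istar x with rfl | hne
        · simp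
        · rw [if_neg hne]
          constructor
          · intro h; right; omega
          · rintro (h | h)
            · exact absurd h.symm hne
            · omega
      have hc01 : ∀ i, c i ≤ 1 := by
        intro i
        rw [hcval]
        rcases eq_or_ne istar i with rfl | hne
        · have : d istar = 0 := by
            by_contra h
            exact histard (Finsupp.mem_support_iff.mpr h)
          rw [this, if_pos rfl]
        · rw [if_neg hne]
          have := hd01 i
          omega
      have hcdm : ¬ dm S c := by
        rw [dm_iff hdeg]
        rintro (⟨i, j, hij, he, h1, h2⟩ | ⟨i, hlp, h2⟩)
        · have hiA : i ∈ insert istar d.support :=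
            hcsupp ▸ Finsupp.mem_support_iff.mpr (by omega)
          have hjA : j ∈ insert istar d.support :=
            hcsupp ▸ Finsupp.mem_support_iff.mpr (by omega)
          have hiA' : i ∈ Astar := by
            rcases Finset.mem_insert.mp hiA with rfl | h
            · exact histar
            · exact hdsub h
          have hjA' : j ∈ Astar := by
            rcases Finset.mem_insert.mp hjA with rfl | h
            · exact histar
            · exact hdsub h
          exact hindepA i hiA' j hjA' hij he
        · have := hc01 i; omega
      have heq := E1 c hcdm
      rw [hcsupp, Finset.sum_insert histard] at heq
      have htermz : ∀ j ∈ d.support, coeff (c - Finsupp.single j 1) q = 0 := by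
        intro j hj
        have hjstar : istar ≠ j := fun h => histard (h ▸ hj)
        have hdj1 : d j = 1 := by
          have := Finsupp.mem_support_iff.mp hj
          have := hd01 j
          omega
        have hsupp4 : (c - Finsupp.single j 1).support = insert istar (d.support.erase j) := by
          ext x
          rw [Finsupp.mem_support_iff, Finsupp.tsub_apply, Finsupp.single_apply, hcval,
            Finset.mem_insert, Finset.mem_erase, Finsupp.mem_support_iff]
          rcases eq_or_ne istar x with rfl | hne
          · rw [if_pos rfl, if_neg (fun h : j = istar => hjstar h.symm)]
            simp
          · rw [if_neg hne]
            rcases eq_or_ne j x with rfl | hne2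
            · rw [if_pos rfl, hdj1]
              simp only [Nat.add_zero]
              constructor
              · intro h; omega
              · rintro (h | ⟨h, -⟩)
                · exact absurd h.symm hne
                · exact absurd rfl h
            · rw [if_neg hne2]
              constructor
              · intro h; right; exact ⟨Ne.symm hne2, by omega⟩
              · rintro (h | ⟨-, h⟩)
                · exact absurd h.symm hne
                · omega
        have hcard4 : (c - Finsupp.single j 1).support.card = a := by
          rw [hsupp4, Finset.card_insert_of_notMem (fun h => histard (Finset.erase_subset _ _ h)),
            Finset.card_erase_of_mem hj, hcard]
          have hapos : 1 ≤ a := by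
            rw [← hcard]
            exact Finset.card_pos.mpr ⟨j, hj⟩
          omega
        refine step1 _ hcard4 ⟨istar, ?_, histarL⟩
        rw [hsupp4]
        exact Finset.mem_insert_self _ _
      rw [Finset.sum_eq_zero htermz, add_zero, hc, add_tsub_cancel_right] at heq
      exact hd0 heq
  rw [eq_zero_iff]
  intro d
  exact main d.support.card d rfl

open Pointwise

theorem mem_smul_top {R M : Type*} [CommRing R] [AddCommGroup M] [Module R M] (r : R) (x : M) :
    x ∈ r • (⊤ : Submodule R M) ↔ ∃ y : M, r • y = x := by
  rw [← SetLike.mem_coe, Submodule.coe_pointwise_smul]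
  constructor
  · rintro ⟨y, -, rfl⟩; exact ⟨y, rfl⟩
  · rintro ⟨y, rfl⟩; exact ⟨y, trivial, rfl⟩

theorem I_le_max (hdeg : ∀ u ∈ S, mdeg u = 2) : monomialIdeal K S ≤ maxIdl K n := by
  intro p hp
  rw [mem_maxIdl, constantCoeff_eq]
  by_contra h
  obtain ⟨s, hs, hle⟩ := mem_mI.mp hp 0 (mem_support_iff.mpr h)
  have h1 : mdeg s ≤ mdeg (0 : Fin n →₀ ℕ) := mdeg_mono hle
  rw [mdeg_zero, hdeg s hs] at h1
  omega

theorem cc_sg : constantCoeff (sg K n) = 0 := by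
  rw [sg, map_sum]
  simp

theorem sg_mem_max : sg K n ∈ maxIdl K n := by
  rw [mem_maxIdl, cc_sg]

theorem coeff_one_I (hdeg : ∀ u ∈ S, mdeg u = 2) {p : MvPolynomial (Fin n) K}
    (hp : p ∈ monomialIdeal K S) (j : Fin n) : coeff (Finsupp.single j 1) p = 0 := by
  by_contra h
  obtain ⟨s, hs, hle⟩ := mem_mI.mp hp _ (mem_support_iff.mpr h)
  have h1 : mdeg s ≤ mdeg (Finsupp.single j 1) := mdeg_mono hle
  rw [mdeg_single, hdeg s hs] at h1
  omega

theorem coeff_one_sum {B : Finset (Fin n)} (j : Fin n) :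
    coeff (Finsupp.single j 1) (∑ i ∈ B, (X i : MvPolynomial (Fin n) K))
      = if j ∈ B then 1 else 0 := by
  classical
  rw [coeff_sum]
  rw [Finset.sum_congr rfl (fun i _ => ?_)]
  · exact Finset.sum_ite_eq' B j (fun _ => 1)
  · show coeff (Finsupp.single j 1) (X i : MvPolynomial (Fin n) K) = if i = j then 1 else 0
    rw [coeff_X']
    rcases eq_or_ne i j with rfl | hne
    · rw [if_pos rfl, if_pos rfl]
    · rw [if_neg (fun h => hne (by
        have := congrArg (fun (u : Fin n →₀ ℕ) => u i) h
        simp only [Finsupp.single_eq_same] at this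
        by_contra hne2
        rw [Finsupp.single_eq_of_ne' (Ne.symm hne)] at this
        omega)), if_neg hne]

theorem coeff_one_mul_sg (h : MvPolynomial (Fin n) K) (j : Fin n) :
    coeff (Finsupp.single j 1) (h * sg K n) = constantCoeff h := by
  classical
  rw [sg, Finset.mul_sum, coeff_sum]
  have hsupp : (Finsupp.single j 1 : Fin n →₀ ℕ).support = {j} :=
    Finsupp.support_single_ne_zero _ one_ne_zero
  have hstep : ∀ i : Fin n,
      coeff (Finsupp.single j 1) (h * X i) = if i = j then constantCoeff h else 0 := by
    intro i
    rw [coeff_mul_X', hsupp]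
    rcases eq_or_ne i j with rfl | hne
    · rw [if_pos (Finset.mem_singleton_self i), if_pos rfl, tsub_self]
      rw [constantCoeff_eq]
    · rw [if_neg (fun hmem => hne (Finset.mem_singleton.mp hmem)), if_neg hne]
  rw [Finset.sum_congr rfl (fun i _ => hstep i)]
  rw [Finset.sum_ite_eq' Finset.univ j (fun _ => constantCoeff h)]
  rw [if_pos (Finset.mem_univ j)]

theorem reg_of_smulreg {I : Ideal (MvPolynomial (Fin n) K)} {f : MvPolynomial (Fin n) K}
    (hf : IsSMulRegular (MvPolynomial (Fin n) K ⧸ I) f) {p : MvPolynomial (Fin n) K}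
    (h : f * p ∈ I) : p ∈ I := by
  have h0 : f • (Ideal.Quotient.mk I p) = f • (0 : MvPolynomial (Fin n) K ⧸ I) := by
    rw [smul_zero]
    show Ideal.Quotient.mk I (f * p) = 0
    rw [Ideal.Quotient.eq_zero_iff_mem]
    exact h
  have h1 := hf h0
  rwa [← Ideal.Quotient.eq_zero_iff_mem]

theorem smulreg_of_reg {I : Ideal (MvPolynomial (Fin n) K)} {f : MvPolynomial (Fin n) K}
    (hreg : ∀ p, f * p ∈ I → p ∈ I) :
    IsSMulRegular (MvPolynomial (Fin n) K ⧸ I) f := by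
  intro x y hxy
  obtain ⟨px, rfl⟩ := Ideal.Quotient.mk_surjective x
  obtain ⟨py, rfl⟩ := Ideal.Quotient.mk_surjective y
  have h1 : Ideal.Quotient.mk I (f * px) = Ideal.Quotient.mk I (f * py) := hxy
  rw [Ideal.Quotient.eq] at h1 ⊢
  have h2 : f * (px - py) ∈ I := by rw [mul_sub]; exact h1
  exact hreg _ h2

theorem false_n0 (hdeg : ∀ u ∈ S, mdeg u = 2)
    (hm : maxIdl K n ∉ associatedPrimes (MvPolynomial (Fin n) K)
      (MvPolynomial (Fin n) K ⧸ monomialIdeal K S)) (hn : n = 0) : False := by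
  subst hn
  have hI : monomialIdeal K S = ⊥ := by
    have hS : S = ∅ := by
      ext u
      simp only [Set.mem_empty_iff_false, iff_false]
      intro hu
      have hu0 : u = 0 := by ext a; exact a.elim0
      have h2 := hdeg u hu
      rw [hu0, mdeg_zero] at h2
      omega
    rw [hS, monomialIdeal]
    simp
  have hmax : maxIdl K 0 = ⊥ := by
    rw [maxIdl]
    have hr : (Set.range (X : Fin 0 → MvPolynomial (Fin 0) K)) = ∅ := Set.range_eq_empty _
    rw [hr, Ideal.span_empty]
  apply hm
  rw [hmax]
  refine isAssociatedPrime_iff.mpr ⟨Ideal.bot_prime, Ideal.Quotient.mk _ 1, ?_⟩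
  rw [Submodule.bot_colon']
  ext r
  rw [Submodule.mem_annihilator_span_singleton]
  show r ∈ (⊥ : Ideal (MvPolynomial (Fin 0) K)) ↔
    Ideal.Quotient.mk (monomialIdeal K S) (r * 1) = 0
  rw [mul_one, Ideal.Quotient.eq_zero_iff_mem, hI]

theorem false_n1 (hdeg : ∀ u ∈ S, mdeg u = 2)
    (hfull : ∀ i : Fin n, ∃ u ∈ S, u i ≠ 0)
    (hm : maxIdl K n ∉ associatedPrimes (MvPolynomial (Fin n) K)
      (MvPolynomial (Fin n) K ⧸ monomialIdeal K S)) (hn : n = 1) : False := by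
  subst hn
  have hsub : ∀ i : Fin 1, i = 0 := fun i => Subsingleton.elim i 0
  obtain ⟨i, hiA, hiL⟩ := maximal_indep_nonloop hdeg hm {0}
    (fun i hi j hj hij _ => absurd ((hsub i).trans (hsub j).symm) hij)
    (fun i hi => absurd (Finset.mem_singleton.mpr (hsub i)) hi)
  obtain ⟨u, hu, hui⟩ := hfull i
  obtain ⟨a, b, rfl⟩ := mdeg_two (hdeg u hu)
  apply hiL
  rw [Lp, hsub i, ← single_add_single_self]
  rw [hsub a, hsub b] at hu
  exact hu

end Stmt14Aux



/-- The saturation `I[i] = (I : xᵢ^∞)` of `I` with respect to the variable `xᵢ`. -/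
noncomputable def sat {K : Type*} [Field K] {n : ℕ} (I : Ideal (MvPolynomial (Fin n) K)) (i : Fin n) :
    Ideal (MvPolynomial (Fin n) K) :=
  ⨆ t : ℕ, I.colon ((Ideal.span {X i ^ t} : Ideal (MvPolynomial (Fin n) K)) : Set (MvPolynomial (Fin n) K))

/-- The stability index of the sets of associated primes of powers of `I`. -/
noncomputable def astab {K : Type*} [Field K] {n : ℕ}
    (I : Ideal (MvPolynomial (Fin n) K)) : ℕ :=
  sInf {k | 0 < k ∧ ∀ m, k ≤ m →
    associatedPrimes (MvPolynomial (Fin n) K) (MvPolynomial (Fin n) K ⧸ I ^ m) =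
      associatedPrimes (MvPolynomial (Fin n) K) (MvPolynomial (Fin n) K ⧸ I ^ k)}

/-- The depth of `R/I`: the longest regular sequence on `R/I` inside the maximal ideal. -/
noncomputable def depthQ {K : Type*} [Field K] {n : ℕ}
    (I : Ideal (MvPolynomial (Fin n) K)) : ℕ :=
  sSup {k | ∃ rs : List (MvPolynomial (Fin n) K), rs.length = k ∧
    (∀ r ∈ rs, r ∈ maxIdl K n) ∧
    RingTheory.Sequence.IsRegular (MvPolynomial (Fin n) K ⧸ I) rs}

/-- The stability index of the depths of powers of `I`. -/
noncomputable def dstab {K : Type*} [Field K] {n : ℕ}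
    (I : Ideal (MvPolynomial (Fin n) K)) : ℕ :=
  sInf {k | 0 < k ∧ ∀ m, k ≤ m → depthQ (I ^ m) = depthQ (I ^ k)}

/-- A full-supported polymatroidal ideal `I` of degree `2` with
`𝔪 ∉ Ass(R/I)` satisfies `depth(R/I) = 1`. -/
theorem stmt14 {K : Type*} [Field K] {n : ℕ}
    (S : Set (Fin n →₀ ℕ)) (I : Ideal (MvPolynomial (Fin n) K))
    (hI : I = monomialIdeal K S)
    (hdeg : ∀ u ∈ S, mdeg u = 2)
    (hexch : ∀ u ∈ S, ∀ v ∈ S, ∀ i : Fin n, v i < u i →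
      ∃ j : Fin n, u j < v j ∧
        monomial (u - Finsupp.single i 1 + Finsupp.single j 1) (1 : K) ∈ I)
    (hfull : ∀ i : Fin n, ∃ u ∈ S, u i ≠ 0)
    (hm : maxIdl K n ∉
      associatedPrimes (MvPolynomial (Fin n) K) (MvPolynomial (Fin n) K ⧸ I)) :
    depthQ I = 1 := by
  classical
  subst hI
  rcases Nat.lt_or_ge n 2 with hn2 | hn2
  · exfalso
    rcases Nat.lt_or_ge n 1 with hn1 | hn1
    · exact Stmt14Aux.false_n0 hdeg hm (by omega)
    · exact Stmt14Aux.false_n1 hdeg hfull hm (by omega)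
  set Imon := monomialIdeal K S with hImon
  have hsreg : ∀ p : MvPolynomial (Fin n) K, sg K n * p ∈ Imon → p ∈ Imon :=
    fun p hp => Stmt14Aux.sigma_regular hdeg hm p hp
  have hσsm : IsSMulRegular (MvPolynomial (Fin n) K ⧸ Imon) (sg K n) :=
    Stmt14Aux.smulreg_of_reg hsreg
  rw [depthQ]
  apply IsGreatest.csSup_eq
  constructor
  · refine ⟨[sg K n], rfl, ?_, ?_⟩
    · intro r hr
      rw [List.mem_singleton] at hr
      subst hr
      exact Stmt14Aux.sg_mem_max
    · rw [RingTheory.Sequence.isRegular_cons_iff]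
      refine ⟨hσsm, ?_⟩
      haveI hnt : Nontrivial (QuotSMulTop (sg K n) (MvPolynomial (Fin n) K ⧸ Imon)) := by
        refine nontrivial_of_ne (Submodule.Quotient.mk (Ideal.Quotient.mk Imon 1)) 0 ?_
        intro heq
        rw [Submodule.Quotient.mk_eq_zero] at heq
        obtain ⟨y, hy⟩ := (Stmt14Aux.mem_smul_top _ _).mp heq
        obtain ⟨h, rfl⟩ := Ideal.Quotient.mk_surjective y
        have h2 : Ideal.Quotient.mk Imon (sg K n * h) = Ideal.Quotient.mk Imon 1 := hy
        rw [Ideal.Quotient.eq] at h2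
        have h3 := Stmt14Aux.I_le_max hdeg h2
        rw [Stmt14Aux.mem_maxIdl, map_sub, map_mul, Stmt14Aux.cc_sg, map_one, zero_mul] at h3
        simp at h3
      exact RingTheory.Sequence.IsRegular.nil _ _
  · rintro k ⟨rs, hlen, hmemm, hregs⟩
    by_contra hk
    push_neg at hk
    rcases rs with _ | ⟨f, rs'⟩
    · rw [List.length_nil] at hlen; omega
    rcases rs' with _ | ⟨g, t⟩
    · rw [List.length_cons, List.length_nil] at hlen; omega
    have hfm : f ∈ maxIdl K n := hmemm f (by simp)
    have hgm : g ∈ maxIdl K n := hmemm g (by simp)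
    rw [RingTheory.Sequence.isRegular_cons_iff] at hregs
    obtain ⟨hf, hrest⟩ := hregs
    rw [RingTheory.Sequence.isRegular_cons_iff] at hrest
    obtain ⟨hg, -⟩ := hrest
    obtain ⟨B, hBne, hBuniv, hcross⟩ := Stmt14Aux.exists_cut hdeg hexch hfull hn2
    set z : MvPolynomial (Fin n) K := ∑ i ∈ B, X i with hz
    set J : Ideal (MvPolynomial (Fin n) K) := Ideal.span {sg K n} ⊔ Imon with hJ
    have hznot : z ∉ J := by
      intro hmem
      rw [hJ] at hmem
      obtain ⟨y, hy, p0, hp0, hsum⟩ := Submodule.mem_sup.mp hmem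
      obtain ⟨h, rfl⟩ := Ideal.mem_span_singleton'.mp hy
      obtain ⟨iB, hiB⟩ := hBne
      obtain ⟨iC, hiC⟩ : ∃ i, i ∉ B := by
        by_contra hcon
        push_neg at hcon
        exact hBuniv (Finset.eq_univ_iff_forall.mpr hcon)
      have e1 := congrArg (coeff (Finsupp.single iB 1)) hsum
      have e2 := congrArg (coeff (Finsupp.single iC 1)) hsum
      rw [coeff_add, Stmt14Aux.coeff_one_mul_sg, Stmt14Aux.coeff_one_I hdeg hp0, hz,
        Stmt14Aux.coeff_one_sum, if_pos hiB, add_zero] at e1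
      rw [coeff_add, Stmt14Aux.coeff_one_mul_sg, Stmt14Aux.coeff_one_I hdeg hp0, hz,
        Stmt14Aux.coeff_one_sum, if_neg hiC, add_zero] at e2
      rw [e2] at e1
      exact zero_ne_one e1
    have hmul : ∀ r ∈ maxIdl K n, r * z ∈ J := by
      intro r hr
      have hcolon : maxIdl K n ≤ J.colon (Ideal.span {z}) := by
        rw [maxIdl, Ideal.span_le]
        rintro - ⟨i, rfl⟩
        rw [SetLike.mem_coe, Ideal.mem_colon_span_singleton]
        by_cases hiB : i ∈ B
        · have hsplit : sg K n - z = ∑ k ∈ Bᶜ, X k := by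
            rw [hz, sg, sub_eq_iff_eq_add]
            rw [← Finset.sum_add_sum_compl B (fun i => (X i : MvPolynomial (Fin n) K))]
            ring
          have h2 : X i * (sg K n - z) ∈ Imon := by
            rw [hsplit, Finset.mul_sum]
            apply Ideal.sum_mem
            intro k hk
            rw [Finset.mem_compl] at hk
            have hE := hcross i hiB k hk
            have hXX : (X i : MvPolynomial (Fin n) K) * X k
                = monomial (Finsupp.single i 1 + Finsupp.single k 1) 1 := by
              rw [X, X, monomial_mul, one_mul]
            rw [hXX]
            exact Stmt14Aux.S_mem hE
          have h3 : X i * sg K n ∈ Ideal.span {sg K n} :=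
            Ideal.mem_span_singleton'.mpr ⟨X i, rfl⟩
          have h4 : X i * z = X i * sg K n - X i * (sg K n - z) := by ring
          rw [h4]
          exact Ideal.sub_mem _ (Ideal.mem_sup_left h3) (Ideal.mem_sup_right h2)
        · have h2 : X i * z ∈ Imon := by
            rw [hz, Finset.mul_sum]
            apply Ideal.sum_mem
            intro k hk
            have hE := hcross k hk i hiB
            have hXX : (X i : MvPolynomial (Fin n) K) * X k
                = monomial (Finsupp.single k 1 + Finsupp.single i 1) 1 := by
              rw [X, X, monomial_mul, one_mul, add_comm]
            rw [hXX]
            exact Stmt14Aux.S_mem hE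
          exact Ideal.mem_sup_right h2
      have hh := hcolon hr
      rwa [Ideal.mem_colon_span_singleton] at hh
    obtain ⟨yf, hyf, p0, hp0, hfe⟩ := Submodule.mem_sup.mp (hmul f hfm)
    obtain ⟨w, rfl⟩ := Ideal.mem_span_singleton'.mp hyf
    obtain ⟨yg, hyg, p1, hp1, hge⟩ := Submodule.mem_sup.mp (hmul g hgm)
    obtain ⟨w', rfl⟩ := Ideal.mem_span_singleton'.mp hyg
    have key1 : sg K n * (f * w' - g * w) ∈ Imon := by
      have hcalc : sg K n * (f * w' - g * w) = g * p0 - f * p1 := by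
        linear_combination f * hge - g * hfe
      rw [hcalc]
      exact Ideal.sub_mem _ (Ideal.mul_mem_left _ _ hp0) (Ideal.mul_mem_left _ _ hp1)
    have key1' : f * w' - g * w ∈ Imon := hsreg _ key1
    have key2 : g * w ∈ Ideal.span {f} ⊔ Imon := by
      have hh : g * w = f * w' - (f * w' - g * w) := by ring
      rw [hh]
      exact Ideal.sub_mem _
        (Ideal.mem_sup_left (Ideal.mem_span_singleton'.mpr ⟨w', mul_comm w' f⟩))
        (Ideal.mem_sup_right key1')
    have key3 : w ∉ Ideal.span {f} ⊔ Imon := by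
      intro hmem
      obtain ⟨y, hy, p2, hp2, hsum2⟩ := Submodule.mem_sup.mp hmem
      obtain ⟨u, rfl⟩ := Ideal.mem_span_singleton'.mp hy
      have h5 : f * (z - u * sg K n) ∈ Imon := by
        have hcalc : f * (z - u * sg K n) = p2 * sg K n + p0 := by
          linear_combination - hfe - sg K n * hsum2
        rw [hcalc]
        exact Ideal.add_mem _ (Ideal.mul_mem_right _ _ hp2) hp0
      have h6 : z - u * sg K n ∈ Imon := Stmt14Aux.reg_of_smulreg hf h5
      apply hznot
      rw [hJ]
      have hh : z = u * sg K n + (z - u * sg K n) := by ring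
      rw [hh]
      exact Ideal.add_mem _
        (Ideal.mem_sup_left (Ideal.mem_span_singleton'.mpr ⟨u, rfl⟩))
        (Ideal.mem_sup_right h6)
    apply key3
    have hξ : g • (Submodule.Quotient.mk (Ideal.Quotient.mk Imon w) :
        QuotSMulTop f (MvPolynomial (Fin n) K ⧸ Imon)) = 0 := by
      show (Submodule.Quotient.mk (g • (Ideal.Quotient.mk Imon w)) :
          QuotSMulTop f (MvPolynomial (Fin n) K ⧸ Imon)) = 0
      rw [Submodule.Quotient.mk_eq_zero]
      obtain ⟨y', hy', p3, hp3, hsum3⟩ := Submodule.mem_sup.mp key2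
      obtain ⟨u', rfl⟩ := Ideal.mem_span_singleton'.mp hy'
      rw [Stmt14Aux.mem_smul_top]
      refine ⟨Ideal.Quotient.mk Imon u', ?_⟩
      show Ideal.Quotient.mk Imon (f * u') = Ideal.Quotient.mk Imon (g * w)
      rw [Ideal.Quotient.eq]
      have hh : f * u' - g * w = -p3 := by linear_combination hsum3
      rw [hh]
      exact Imon.neg_mem hp3
    have hξ0 : (Submodule.Quotient.mk (Ideal.Quotient.mk Imon w) :
        QuotSMulTop f (MvPolynomial (Fin n) K ⧸ Imon)) = 0 := by
      apply hg
      show g • (Submodule.Quotient.mk (Ideal.Quotient.mk Imon w) :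
          QuotSMulTop f (MvPolynomial (Fin n) K ⧸ Imon)) = g • (0 :
          QuotSMulTop f (MvPolynomial (Fin n) K ⧸ Imon))
      rw [hξ, smul_zero]
    rw [Submodule.Quotient.mk_eq_zero, Stmt14Aux.mem_smul_top] at hξ0
    obtain ⟨y, hy⟩ := hξ0
    obtain ⟨u'', rfl⟩ := Ideal.Quotient.mk_surjective y
    have h7 : Ideal.Quotient.mk Imon (f * u'') = Ideal.Quotient.mk Imon w := hy
    rw [Ideal.Quotient.eq] at h7
    have hh : w = f * u'' - (f * u'' - w) := by ring
    rw [hh]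
    exact Ideal.sub_mem _
      (Ideal.mem_sup_left (Ideal.mem_span_singleton'.mpr ⟨u'', mul_comm u'' f⟩))
      (Ideal.mem_sup_right h7)
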